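/- (Simplicity of high a-points.) Let a ≠ 0 be a complex number and assume d ≥ 1. There exists t₀ > 0 such that every nontrivial a-point δ_a = β_a + iγ_a of Δ with |γ_a| ≥ t₀ is simple, i.e., Δ'(δ_a) ≠ 0. -/

import Mathlib

noncomputable def Delta (r : ℕ) (Q : ℝ) (lam : Fin r → ℝ) (mu : Fin r → ℂ) (ω : ℂ) (s : ℂ) : ℂ :=
  ω * (Q : ℂ) ^ (1 - 2 * s) *
    ∏ j, Complex.Gamma ((lam j : ℂ) * (1 - s) + (starRingEnd ℂ) (mu j)) /
      Complex.Gamma ((lam j : ℂ) * s + mu j)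

noncomputable def deg (r : ℕ) (lam : Fin r → ℝ) : ℝ := 2 * ∑ j, lam j

noncomputable def lamConst (r : ℕ) (lam : Fin r → ℝ) : ℝ := ∏ j, (lam j) ^ (2 * lam j)

noncomputable def ThetaConst (r : ℕ) (mu : Fin r → ℂ) : ℝ := (2 * ∑ j, (mu j - 1 / 2)).im

noncomputable def etaConst (r : ℕ) (mu : Fin r → ℂ) : ℝ := (2 * ∑ j, (mu j - 1 / 2)).re

noncomputable def psi (t : ℝ) : ℝ := Real.log t / Real.log (Real.log t)

/-- A nontrivial `a`-point of `Δ`: a solution of `Δ(s) = a` with `0 ≤ Re s ≤ 1`. -/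
def IsAPoint (r : ℕ) (Q : ℝ) (lam : Fin r → ℝ) (mu : Fin r → ℂ) (ω : ℂ) (a : ℂ) (s : ℂ) : Prop :=
  Delta r Q lam mu ω s = a ∧ 0 ≤ s.re ∧ s.re ≤ 1

open scoped Classical in
/-- Multiplicity of an `a`-point of `Δ`, as the order of vanishing of `Δ - a`. -/
noncomputable def mult (r : ℕ) (Q : ℝ) (lam : Fin r → ℝ) (mu : Fin r → ℂ) (ω : ℂ) (a : ℂ)
    (s : ℂ) : ℕ :=
  if h : AnalyticAt ℂ (fun z => Delta r Q lam mu ω z - a) s then (analyticOrderAt (fun z => Delta r Q lam mu ω z - a) s).toNat else 0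

/-- Number of nontrivial `a`-points with `0 < γ ≤ T`, counted with multiplicity. -/
noncomputable def Nplus (r : ℕ) (Q : ℝ) (lam : Fin r → ℝ) (mu : Fin r → ℂ) (ω : ℂ) (a : ℂ)
    (T : ℝ) : ℕ :=
  ∑ᶠ s ∈ {s : ℂ | IsAPoint r Q lam mu ω a s ∧ 0 < s.im ∧ s.im ≤ T}, mult r Q lam mu ω a s

/-- Number of nontrivial `a`-points with `0 < -γ ≤ T`, counted with multiplicity. -/
noncomputable def Nminus (r : ℕ) (Q : ℝ) (lam : Fin r → ℝ) (mu : Fin r → ℂ) (ω : ℂ) (a : ℂ)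
    (T : ℝ) : ℕ :=
  ∑ᶠ s ∈ {s : ℂ | IsAPoint r Q lam mu ω a s ∧ 0 < -s.im ∧ -s.im ≤ T}, mult r Q lam mu ω a s


open Complex Filter Finset Topology

namespace ApSimple

/-- The open set `{z | Im z ≠ 0}`. -/
def Udom : Set ℂ := {z | z.im ≠ 0}

lemma isOpen_Udom : IsOpen Udom := isOpen_ne.preimage Complex.continuous_im

lemma mem_slit {z : ℂ} (hz : z ∈ Udom) (k : ℕ) : z + k ∈ Complex.slitPlane := by
  refine Complex.mem_slitPlane_iff.2 (Or.inr ?_)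
  simpa using (show z.im ≠ 0 from hz)

lemma add_nat_ne_zero {z : ℂ} (hz : z ∈ Udom) (k : ℕ) : z + k ≠ 0 :=
  Complex.slitPlane_ne_zero (mem_slit hz k)

/-- Logarithm of `GammaSeq`. -/
noncomputable def fseq (n : ℕ) (z : ℂ) : ℂ :=
  z * Real.log n + Real.log (Nat.factorial n) - ∑ k ∈ Finset.range (n + 1), Complex.log (z + k)

lemma exp_fseq {n : ℕ} (hn : 1 ≤ n) {z : ℂ} (hz : z ∈ Udom) :
    Complex.exp (fseq n z) = Complex.GammaSeq z n := by
  have hn0 : (n : ℂ) ≠ 0 := Nat.cast_ne_zero.2 (by omega)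
  rw [fseq, Complex.GammaSeq, Complex.exp_sub, Complex.exp_add, Complex.exp_sum]
  congr 1
  · congr 1
    · rw [Complex.cpow_def_of_ne_zero hn0, ← Complex.natCast_log, mul_comm]
    · rw [← Complex.ofReal_exp, Real.exp_log (by positivity)]
      simp
  · exact Finset.prod_congr rfl fun k _ => Complex.exp_log (add_nat_ne_zero hz k)

noncomputable def gseq (m : ℕ) (z : ℂ) : ℂ := fseq (m + 2) z - fseq (m + 1) z

lemma gseq_eq {m : ℕ} {z : ℂ} (hz : z ∈ Udom) :
    gseq m z = z * ((Real.log (m + 2) : ℂ) - Real.log (m + 1))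
      - Complex.log (1 + z / (m + 2)) := by
  have hp0 : (0:ℝ) < (m + 2 : ℕ) := by positivity
  have hm2 : ((m : ℂ) + 2) ≠ 0 := by
    have : (((m + 2 : ℕ) : ℂ)) ≠ 0 := Nat.cast_ne_zero.2 (by omega)
    push_cast at this
    exact this
  have heq1 : (1 : ℂ) + z / (m + 2) = (z + ((m + 2 : ℕ) : ℂ)) / ((m : ℂ) + 2) := by
    push_cast
    field_simp
    ring
  have hne : (1 : ℂ) + z / (m + 2) ≠ 0 := by
    rw [heq1]
    exact div_ne_zero (add_nat_ne_zero hz (m + 2)) hm2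
  have hlog : Complex.log (z + (m + 2 : ℕ)) =
      (Real.log ((m + 2 : ℕ)) : ℂ) + Complex.log (1 + z / (m + 2)) := by
    rw [show (z + ((m + 2 : ℕ) : ℂ)) = ((((m + 2 : ℕ) : ℝ) : ℂ) * (1 + z / (m + 2))) by
      push_cast; field_simp; ring]
    exact Complex.log_ofReal_mul hp0 hne
  have hfact : Real.log (Nat.factorial (m + 2)) =
      Real.log ((m + 2 : ℕ)) + Real.log (Nat.factorial (m + 1)) := by
    rw [show m + 2 = (m+1)+1 from rfl, Nat.factorial_succ]
    push_cast
    rw [Real.log_mul (by positivity) (by positivity)]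
  rw [gseq, fseq, fseq, Finset.sum_range_succ (n := m + 2)]
  rw [hfact, hlog]
  push_cast
  ring

lemma gseq_bound {R : ℝ} (hR : 0 ≤ R) {m : ℕ} (hm : 2 * R + 2 ≤ m) {z : ℂ}
    (hz : z ∈ Udom) (hzR : ‖z‖ ≤ R) :
    ‖gseq m z‖ ≤ (R + R ^ 2) / (m + 1) ^ 2 := by
  have hp : (0:ℝ) < m + 2 := by positivity
  have hp1 : (0:ℝ) < m + 1 := by positivity
  have hc1 : Real.log (m + 2) - Real.log (m + 1) ≤ 1 / (m + 1) := by
    have h := Real.log_le_sub_one_of_pos (x := (m + 2) / (m + 1)) (by positivity)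
    rw [Real.log_div (by positivity) (by positivity)] at h
    have h2 : ((m:ℝ) + 2) / ((m:ℝ) + 1) - 1 = 1 / ((m:ℝ) + 1) := by field_simp; norm_num
    linarith
  have hc2 : 1 / (m + 2) ≤ Real.log (m + 2) - Real.log (m + 1) := by
    have h := Real.log_le_sub_one_of_pos (x := (m + 1) / (m + 2)) (by positivity)
    rw [Real.log_div (by positivity) (by positivity)] at h
    have h2 : ((m:ℝ) + 1) / ((m:ℝ) + 2) - 1 = -(1 / ((m:ℝ) + 2)) := by field_simp; norm_num
    linarith
  have hzp : ‖z / (m + 2 : ℂ)‖ ≤ 1 / 2 := by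
    have h2 : ‖(m + 2 : ℂ)‖ = (m + 2 : ℝ) := by
      rw [show ((m : ℂ) + 2) = ((m + 2 : ℝ) : ℂ) by push_cast; ring, Complex.norm_real,
        Real.norm_of_nonneg (by positivity)]
    rw [norm_div, h2, div_le_iff₀ hp]
    nlinarith
  have hdec : gseq m z = z * (((Real.log (m + 2) - Real.log (m + 1) : ℝ)) - 1 / ((m:ℂ) + 2))
      - (Complex.log (1 + z / (m + 2)) - z / (m + 2)) := by
    rw [gseq_eq hz]
    push_cast
    ring
  rw [hdec]
  have h1 : ‖z * (((Real.log (m + 2) - Real.log (m + 1) : ℝ)) - 1 / ((m:ℂ) + 2))‖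
      ≤ R * (1 / (m + 1) ^ 2) := by
    rw [norm_mul]
    have heq : (((Real.log (m + 2) - Real.log (m + 1) : ℝ)) - 1 / ((m:ℂ) + 2))
        = (((Real.log (m + 2) - Real.log (m + 1) - 1 / (m + 2) : ℝ)) : ℂ) := by
      push_cast; ring
    rw [heq, Complex.norm_real, Real.norm_eq_abs]
    have habs : |Real.log (m + 2) - Real.log (m + 1) - 1 / (m + 2)| ≤ 1 / (m + 1) ^ 2 := by
      have hpos : (0:ℝ) < 1 / ((m:ℝ) + 1) ^ 2 := by positivity
      rw [abs_le]
      constructor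
      · linarith
      · have : 1 / (m + 1) - 1 / (m + 2) ≤ 1 / (m + 1 : ℝ) ^ 2 := by
          rw [div_sub_div _ _ (ne_of_gt hp1) (ne_of_gt hp)]
          rw [div_le_div_iff₀ (by positivity) (by positivity)]
          nlinarith
        linarith
    exact mul_le_mul hzR habs (abs_nonneg _) hR
  have h2 : ‖Complex.log (1 + z / (m + 2)) - z / (m + 2)‖ ≤ R ^ 2 * (1 / (m + 1) ^ 2) := by
    have hb := Complex.norm_log_one_add_sub_self_le (z := z / (m + 2))
      (lt_of_le_of_lt hzp (by norm_num))
    have hnormdiv : ‖z / ((m:ℂ) + 2)‖ ≤ R / (m + 1) := by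
      rw [norm_div]
      have h2 : ‖(m + 2 : ℂ)‖ = (m + 2 : ℝ) := by
        rw [show ((m : ℂ) + 2) = ((m + 2 : ℝ) : ℂ) by push_cast; ring, Complex.norm_real,
          Real.norm_of_nonneg (by positivity)]
      rw [h2]
      apply div_le_div₀ hR hzR hp1
      linarith
    have hinv : (1 - ‖z / ((m:ℂ) + 2)‖)⁻¹ ≤ 2 := by
      rw [inv_le_comm₀ (by linarith [hzp]) (by norm_num)]
      linarith
    calc ‖Complex.log (1 + z / (m + 2)) - z / (m + 2)‖
        ≤ ‖z / ((m:ℂ) + 2)‖ ^ 2 * (1 - ‖z / ((m:ℂ) + 2)‖)⁻¹ / 2 := hb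
      _ ≤ (R / (m + 1)) ^ 2 * 2 / 2 := by
          apply div_le_div_of_nonneg_right ?_ (by norm_num)
          exact mul_le_mul (pow_le_pow_left₀ (norm_nonneg _) hnormdiv 2) hinv
            (inv_nonneg.2 (by linarith)) (by positivity)
      _ = R ^ 2 * (1 / (m + 1) ^ 2) := by field_simp
  calc ‖_ - _‖ ≤ _ := norm_sub_le _ _
    _ ≤ R * (1 / (m + 1) ^ 2) + R ^ 2 * (1 / (m + 1) ^ 2) := add_le_add h1 h2
    _ = (R + R ^ 2) / (m + 1) ^ 2 := by ring

/-- The limit function: a branch of `log Γ` on `Udom`. -/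
noncomputable def Fl (z : ℂ) : ℂ := fseq 1 z + ∑' m, gseq m z

lemma hasDerivAt_fseq (n : ℕ) {z : ℂ} (hz : z ∈ Udom) :
    HasDerivAt (fseq n) ((Real.log n : ℂ) - ∑ k ∈ Finset.range (n + 1), (z + k)⁻¹) z := by
  have h1 : HasDerivAt (fun z : ℂ => z * (Real.log n : ℂ) + (Real.log (Nat.factorial n) : ℂ))
      (Real.log n : ℂ) z := (hasDerivAt_mul_const _).add_const _
  have h2 : HasDerivAt (fun z : ℂ => ∑ k ∈ Finset.range (n + 1), Complex.log (z + k))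
      (∑ k ∈ Finset.range (n + 1), (z + k)⁻¹) z := by
    apply HasDerivAt.fun_sum
    intro k _
    have := ((hasDerivAt_id z).add_const (k:ℂ)).clog (mem_slit hz k)
    simpa using this
  exact h1.sub h2

lemma differentiableOn_fseq (n : ℕ) : DifferentiableOn ℂ (fseq n) Udom :=
  fun z hz => ((hasDerivAt_fseq n hz).differentiableAt).differentiableWithinAt

lemma continuousOn_gseq (m : ℕ) : ContinuousOn (gseq m) Udom :=
  ((differentiableOn_fseq (m+2)).continuousOn).sub ((differentiableOn_fseq (m+1)).continuousOn)

lemma tlu_fseq : TendstoLocallyUniformlyOn fseq Fl atTop Udom := by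
  rw [tendstoLocallyUniformlyOn_iff_forall_isCompact isOpen_Udom]
  intro K hKU hK
  obtain ⟨R0, hR0⟩ := hK.exists_bound_of_continuousOn continuousOn_id
  set R : ℝ := max R0 0 with hRdef
  have hR : 0 ≤ R := le_max_right _ _
  have hzR : ∀ z ∈ K, ‖z‖ ≤ R := fun z hz => le_trans (hR0 z hz) (le_max_left _ _)
  set M : ℕ := ⌈2 * R + 2⌉₊ with hMdef
  have hcont : ContinuousOn (fun z => ∑ m ∈ Finset.range M, ‖gseq m z‖) K := by
    apply ContinuousOn.mono ?_ hKU
    exact continuousOn_finset_sum _ fun m _ => (continuousOn_gseq m).norm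
  obtain ⟨C1, hC1⟩ := hK.exists_bound_of_continuousOn hcont
  have hsum0 : Summable (fun m : ℕ => 1 / ((m : ℝ) + 1) ^ 2) := by
    have := (Real.summable_one_div_nat_pow (p := 2)).2 one_lt_two
    have h2 := (summable_nat_add_iff (f := fun n : ℕ => 1 / (n : ℝ) ^ 2) 1).2 this
    apply h2.congr
    intro m
    push_cast
    ring
  have husum : Summable (fun m : ℕ =>
      (if m < M then max C1 0 else 0) + (R + R ^ 2) / ((m : ℝ) + 1) ^ 2) := by
    apply Summable.add
    · exact summable_of_ne_finset_zero (s := Finset.range M)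
        (fun m hm => by rw [Finset.mem_range, not_lt] at hm; rw [if_neg (not_lt.2 hm)])
    · exact (hsum0.mul_left (R + R ^ 2)).congr (fun m => by rw [mul_one_div])
  have hub : ∀ m : ℕ, ∀ z ∈ K,
      ‖gseq m z‖ ≤ (if m < M then max C1 0 else 0) + (R + R ^ 2) / ((m : ℝ) + 1) ^ 2 := by
    intro m z hzK
    by_cases hm : m < M
    · have h1 : ‖gseq m z‖ ≤ ∑ i ∈ Finset.range M, ‖gseq i z‖ :=
        Finset.single_le_sum (f := fun i => ‖gseq i z‖) (fun i _ => norm_nonneg _)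
          (Finset.mem_range.2 hm)
      have h2 : ∑ i ∈ Finset.range M, ‖gseq i z‖ ≤ C1 := by
        have := hC1 z hzK
        rw [Real.norm_eq_abs] at this
        exact le_trans (le_abs_self _) this
      have h3 : (0:ℝ) ≤ (R + R ^ 2) / ((m:ℝ) + 1) ^ 2 := by positivity
      rw [if_pos hm]
      have := le_max_left C1 0
      linarith
    · push_neg at hm
      have hmR : 2 * R + 2 ≤ m := le_trans (Nat.le_ceil _) (by exact_mod_cast hm)
      have := gseq_bound hR hmR (hKU hzK) (hzR z hzK)
      rw [if_neg (not_lt.2 hm)]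
      linarith
  have T := tendstoUniformlyOn_tsum_nat husum hub
  rw [Metric.tendstoUniformlyOn_iff] at T ⊢
  intro ε hε
  obtain ⟨N, hN⟩ := (Filter.eventually_atTop).1 (T ε hε)
  rw [Filter.eventually_atTop]
  refine ⟨N + 1, fun n hn z hzK => ?_⟩
  have hn1 : 1 ≤ n := by omega
  have htel : fseq n z = fseq 1 z + ∑ m ∈ Finset.range (n - 1), gseq m z := by
    have := Finset.sum_range_sub (f := fun i => fseq (i + 1) z) (n - 1)
    have hnn : n - 1 + 1 = n := by omega
    rw [hnn] at this
    rw [show (∑ m ∈ Finset.range (n-1), gseq m z) = fseq n z - fseq 1 z from this]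
    ring
  have hFl : Fl z = fseq 1 z + ∑' m, gseq m z := rfl
  rw [htel, hFl, dist_add_left]
  exact hN (n - 1) (by omega) z hzK

lemma differentiableOn_Fl : DifferentiableOn ℂ Fl Udom :=
  tlu_fseq.differentiableOn (Filter.Eventually.of_forall differentiableOn_fseq) isOpen_Udom

lemma tlu_deriv : TendstoLocallyUniformlyOn (deriv ∘ fseq) (deriv Fl) atTop Udom :=
  tlu_fseq.deriv (Filter.Eventually.of_forall differentiableOn_fseq) isOpen_Udom

lemma Gamma_eq_exp_Fl {z : ℂ} (hz : z ∈ Udom) : Complex.Gamma z = Complex.exp (Fl z) := by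
  have h1 : Tendsto (fun n => fseq n z) atTop (𝓝 (Fl z)) := tlu_fseq.tendsto_at hz
  have h2 : Tendsto (fun n => Complex.exp (fseq n z)) atTop (𝓝 (Complex.exp (Fl z))) :=
    (Complex.continuous_exp.continuousAt.tendsto.comp h1)
  have h3 : Tendsto (fun n => Complex.GammaSeq z n) atTop (𝓝 (Complex.exp (Fl z))) := by
    apply h2.congr'
    filter_upwards [eventually_ge_atTop 1] with n hn
    exact exp_fseq hn hz
  exact tendsto_nhds_unique (Complex.GammaSeq_tendsto_Gamma z) h3

lemma harmonic_tail {m : ℕ} (hm : 1 ≤ m) : ∀ n : ℕ, m ≤ n →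
    ∑ k ∈ Finset.Ico (m + 1) (n + 1), (1 : ℝ) / k ≤ Real.log n - Real.log m := by
  intro n hn
  induction n, hn using Nat.le_induction with
  | base => simp
  | succ n hmn ih =>
    rw [Finset.sum_Ico_succ_top (by omega)]
    have hn0 : (0:ℝ) < n := by exact_mod_cast lt_of_lt_of_le (by omega : 0 < m) hmn
    have key : (1:ℝ) / ((n:ℝ) + 1) ≤ Real.log ((n:ℝ) + 1) - Real.log n := by
      have h := Real.log_le_sub_one_of_pos (x := (n : ℝ) / ((n:ℝ) + 1)) (by positivity)
      rw [Real.log_div (ne_of_gt hn0) (by positivity)] at h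
      have h2 : (n:ℝ) / ((n:ℝ) + 1) - 1 = -(1 / ((n:ℝ) + 1)) := by field_simp; ring
      linarith
    push_cast
    push_cast at ih
    linarith

lemma sum_re_bound {x y : ℝ} (hx : 0 ≤ x) (hy : 1 ≤ y) {n : ℕ} (hn : ⌊y⌋₊ ≤ n) (hn1 : 1 ≤ n) :
    Real.log y - 2 ≤
      Real.log n - ∑ k ∈ Finset.range (n + 1), (x + k) / ((x + k) ^ 2 + y ^ 2) := by
  have hy0 : (0:ℝ) < y := by linarith
  set m := ⌊y⌋₊ with hmdef
  have hm1 : 1 ≤ m := Nat.le_floor (by exact_mod_cast hy)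
  have hmy : (m : ℝ) ≤ y := Nat.floor_le hy0.le
  have hym : y < (m : ℝ) + 1 := Nat.lt_floor_add_one y
  have hsplit : ∑ k ∈ Finset.range (n+1), (x + k)/((x+k)^2+y^2)
      = ∑ k ∈ Finset.range (m+1), (x + k)/((x+k)^2+y^2)
        + ∑ k ∈ Finset.Ico (m+1) (n+1), (x + k)/((x+k)^2+y^2) := by
    rw [Finset.range_eq_Ico, Finset.range_eq_Ico]
    exact (Finset.sum_Ico_consecutive (fun k : ℕ => (x + k)/((x+k)^2+y^2)) (Nat.zero_le _) (by omega : m + 1 ≤ n + 1)).symm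
  have hsum1 : ∑ k ∈ Finset.range (m+1), (x + k)/((x+k)^2+y^2) ≤ 1 := by
    have hterm1 : ∀ k ∈ Finset.range (m+1), (x + (k:ℝ))/((x+(k:ℝ))^2+y^2) ≤ 1/(2*y) := by
      intro k _
      rw [div_le_div_iff₀ (by positivity) (by positivity)]
      nlinarith [sq_nonneg (x + (k:ℝ) - y), Nat.cast_nonneg (α := ℝ) k]
    calc ∑ k ∈ Finset.range (m+1), (x + (k:ℝ))/((x+(k:ℝ))^2+y^2)
        ≤ ∑ _k ∈ Finset.range (m+1), 1/(2*y) := Finset.sum_le_sum hterm1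
      _ = ((m:ℝ)+1) * (1/(2*y)) := by
          rw [Finset.sum_const, Finset.card_range, nsmul_eq_mul]; push_cast; ring
      _ ≤ 1 := by
          rw [mul_one_div, div_le_one (by positivity)]; linarith
  have hsum2 : ∑ k ∈ Finset.Ico (m+1) (n+1), (x + k)/((x+k)^2+y^2)
      ≤ Real.log n - Real.log m := by
    refine le_trans (Finset.sum_le_sum ?_) (harmonic_tail hm1 n hn)
    intro k hk
    have hk1 : 1 ≤ k := by rw [Finset.mem_Ico] at hk; omega
    have hk0 : (0:ℝ) < k := by exact_mod_cast hk1
    rw [div_le_div_iff₀ (by positivity) hk0]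
    nlinarith [sq_nonneg y, Nat.cast_nonneg (α := ℝ) k]
  have hlogy : Real.log y ≤ Real.log m + 1 := by
    have hm0 : (0:ℝ) < m := by exact_mod_cast hm1
    have hm0r : (1:ℝ) ≤ (m:ℝ) := by exact_mod_cast hm1
    have h2m : y ≤ 2 * m := by linarith
    have hl2 : Real.log 2 ≤ 1 := by
      have := Real.log_le_sub_one_of_pos (x := 2) (by norm_num)
      linarith
    calc Real.log y ≤ Real.log (2*m) := Real.log_le_log hy0 h2m
      _ = Real.log 2 + Real.log m := Real.log_mul (by norm_num) (ne_of_gt hm0)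
      _ ≤ Real.log m + 1 := by linarith
  rw [hsplit]
  linarith

lemma re_deriv_Fl {z : ℂ} (hz : z.im ≠ 0) (hx : 0 ≤ z.re) (hy : 1 ≤ |z.im|) :
    Real.log |z.im| - 2 ≤ (deriv Fl z).re := by
  have hzU : z ∈ Udom := hz
  have ht : Tendsto (fun n => deriv (fseq n) z) atTop (𝓝 (deriv Fl z)) :=
    tlu_deriv.tendsto_at hzU
  have htre : Tendsto (fun n => (deriv (fseq n) z).re) atTop (𝓝 ((deriv Fl z).re)) :=
    Complex.continuous_re.continuousAt.tendsto.comp ht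
  refine ge_of_tendsto htre ?_
  filter_upwards [eventually_ge_atTop (max 1 ⌊|z.im|⌋₊)] with n hn
  have hn1 : 1 ≤ n := le_trans (le_max_left _ _) hn
  have hnf : ⌊|z.im|⌋₊ ≤ n := le_trans (le_max_right _ _) hn
  rw [(hasDerivAt_fseq n hzU).deriv]
  have hre : ((Real.log n : ℂ) - ∑ k ∈ Finset.range (n + 1), (z + k)⁻¹).re
      = Real.log n - ∑ k ∈ Finset.range (n + 1), (z.re + k) / ((z.re + k)^2 + |z.im|^2) := by
    rw [Complex.sub_re, Complex.ofReal_re]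
    congr 1
    rw [Complex.re_sum]
    apply Finset.sum_congr rfl
    intro k _
    rw [Complex.inv_re, Complex.normSq_apply, Complex.add_re, Complex.add_im,
      Complex.natCast_re, Complex.natCast_im, _root_.sq_abs z.im]
    ring_nf
  rw [hre]
  exact sum_re_bound hx hy hnf hn1

lemma re_deriv_Fl' {z : ℂ} (hz : z.im ≠ 0) (hx : 0 ≤ z.re) {c : ℝ} (hc : 0 < c)
    (hc1 : 1 ≤ c) (hcz : c ≤ |z.im|) : Real.log c - 2 ≤ (deriv Fl z).re := by
  refine le_trans ?_ (re_deriv_Fl hz hx (le_trans hc1 hcz))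
  have := Real.log_le_log hc hcz
  linarith

end ApSimple

section MainProof

open ApSimple Complex Filter Topology Finset

set_option maxHeartbeats 2000000 in
theorem apoints_simple' (r : ℕ) (Q : ℝ) (lam : Fin r → ℝ) (mu : Fin r → ℂ) (ω : ℂ)
    (hQ : 0 < Q) (hlam : ∀ j, 0 < lam j) (hmu : ∀ j, 0 ≤ (mu j).re)
    (hω : ‖ω‖ = 1)
    (a : ℂ) (ha : a ≠ 0) (hd : 1 ≤ 2 * ∑ j, lam j) :
    ∃ t₀ > 0, ∀ s : ℂ,
      ((ω * (Q : ℂ) ^ (1 - 2 * s) *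
        ∏ j, Complex.Gamma ((lam j : ℂ) * (1 - s) + (starRingEnd ℂ) (mu j)) /
          Complex.Gamma ((lam j : ℂ) * s + mu j)) = a ∧ 0 ≤ s.re ∧ s.re ≤ 1) →
      t₀ ≤ |s.im| →
      deriv (fun s => ω * (Q : ℂ) ^ (1 - 2 * s) *
        ∏ j, Complex.Gamma ((lam j : ℂ) * (1 - s) + (starRingEnd ℂ) (mu j)) /
          Complex.Gamma ((lam j : ℂ) * s + mu j)) s ≠ 0 := by
  have hr0 : 0 < r := by
    rcases Nat.eq_zero_or_pos r with h | h
    · subst h; simp at hd; linarith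
    · exact h
  have hne : (Finset.univ : Finset (Fin r)).Nonempty := ⟨⟨0, hr0⟩, Finset.mem_univ _⟩
  set Bq : ℝ := 2 * |Real.log Q| + 1 with hBqdef
  have hBq : 0 < Bq := by positivity
  set t₀ : ℝ := max 1 (Finset.univ.sup' hne fun j =>
    max ((2 * (|(mu j).im| + 1)) / lam j) ((2 * Real.exp (2 + Bq)) / lam j)) with ht₀def
  have ht₀1 : 1 ≤ t₀ := le_max_left _ _
  have ht₀pos : 0 < t₀ := lt_of_lt_of_le one_pos ht₀1
  have hkey1 : ∀ j, 2 * (|(mu j).im| + 1) ≤ lam j * t₀ := by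
    intro j
    have h1 : (2 * (|(mu j).im| + 1)) / lam j ≤ t₀ := by
      have h2 := Finset.le_sup' (f := fun j =>
        max ((2 * (|(mu j).im| + 1)) / lam j) ((2 * Real.exp (2 + Bq)) / lam j))
        (Finset.mem_univ j)
      exact le_trans (le_trans (le_max_left _ _) h2) (le_max_right _ _)
    rw [div_le_iff₀ (hlam j)] at h1
    linarith
  have hkey2 : ∀ j, Real.exp (2 + Bq) ≤ lam j * t₀ / 2 := by
    intro j
    have h1 : (2 * Real.exp (2 + Bq)) / lam j ≤ t₀ := by
      have h2 := Finset.le_sup' (f := fun j =>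
        max ((2 * (|(mu j).im| + 1)) / lam j) ((2 * Real.exp (2 + Bq)) / lam j))
        (Finset.mem_univ j)
      exact le_trans (le_trans (le_max_right _ _) h2) (le_max_right _ _)
    rw [div_le_iff₀ (hlam j)] at h1
    linarith
  refine ⟨t₀, ht₀pos, ?_⟩
  intro δ hAP hT
  obtain ⟨hDa, hσ0, hσ1⟩ := hAP
  set AA : Fin r → ℂ → ℂ := fun j w => (lam j : ℂ) * (1 - w) + (starRingEnd ℂ) (mu j)
    with hAAdef
  set BB : Fin r → ℂ → ℂ := fun j w => (lam j : ℂ) * w + mu j with hBBdef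
  have himAA : ∀ j w, (AA j w).im = -(lam j * w.im) - (mu j).im := by
    intro j w; simp [hAAdef, Complex.add_im, Complex.mul_im]; ring
  have himBB : ∀ j w, (BB j w).im = lam j * w.im + (mu j).im := by
    intro j w; simp [hBBdef, Complex.add_im, Complex.mul_im]
  have hreAA : ∀ j w, (AA j w).re = lam j * (1 - w.re) + (mu j).re := by
    intro j w; simp [hAAdef, Complex.add_re, Complex.mul_re]
  have hreBB : ∀ j w, (BB j w).re = lam j * w.re + (mu j).re := by
    intro j w; simp [hBBdef, Complex.add_re, Complex.mul_re]
  set V : Set ℂ := {w : ℂ | t₀ / 2 < |w.im|} with hVdef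
  have hVopen : IsOpen V := isOpen_lt continuous_const (continuous_abs.comp Complex.continuous_im)
  have hδV : δ ∈ V := by
    simp only [hVdef, Set.mem_setOf_eq]
    linarith
  have hmemV : ∀ w ∈ V, ∀ j, (AA j w).im ≠ 0 ∧ (BB j w).im ≠ 0 := by
    intro w hw j
    have hw' : t₀ / 2 < |w.im| := hw
    have hlj := hlam j
    have h1 : |(mu j).im| + 1 ≤ lam j * |w.im| := by
      have := hkey1 j
      nlinarith
    have habs : |lam j * w.im| = lam j * |w.im| := by
      rw [abs_mul, abs_of_pos hlj]
    constructor
    · rw [himAA]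
      intro h
      have h2 : lam j * w.im = -(mu j).im := by linarith
      have h3 : |lam j * w.im| = |(mu j).im| := by rw [h2, abs_neg]
      rw [habs] at h3
      linarith
    · rw [himBB]
      intro h
      have h2 : lam j * w.im = -(mu j).im := by linarith
      have h3 : |lam j * w.im| = |(mu j).im| := by rw [h2, abs_neg]
      rw [habs] at h3
      linarith
  have hQC : (Q : ℂ) ≠ 0 := Complex.ofReal_ne_zero.2 (ne_of_gt hQ)
  have hAAU : ∀ w ∈ V, ∀ j, AA j w ∈ Udom := fun w hw j => (hmemV w hw j).1
  have hBBU : ∀ w ∈ V, ∀ j, BB j w ∈ Udom := fun w hw j => (hmemV w hw j).2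
  set G : ℂ → ℂ := fun w => (1 - 2*w) * (Real.log Q : ℂ) + ∑ j, (Fl (AA j w) - Fl (BB j w))
    with hGdef
  have hDeltaEq : ∀ w ∈ V,
      (ω * (Q : ℂ) ^ (1 - 2 * w) * ∏ j, Complex.Gamma (AA j w) / Complex.Gamma (BB j w))
        = ω * Complex.exp (G w) := by
    intro w hw
    have h1 : (Q : ℂ) ^ (1 - 2 * w) = Complex.exp ((1 - 2*w) * (Real.log Q : ℂ)) := by
      rw [Complex.cpow_def_of_ne_zero hQC, ← Complex.ofReal_log hQ.le, mul_comm]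
    have h2 : ∏ j, Complex.Gamma (AA j w) / Complex.Gamma (BB j w)
        = Complex.exp (∑ j, (Fl (AA j w) - Fl (BB j w))) := by
      rw [Complex.exp_sum]
      apply Finset.prod_congr rfl
      intro j _
      rw [Gamma_eq_exp_Fl (hAAU w hw j), Gamma_eq_exp_Fl (hBBU w hw j), Complex.exp_sub]
    rw [h1, h2, hGdef, Complex.exp_add]
    ring
  have hFd : ∀ z ∈ Udom, HasDerivAt Fl (deriv Fl z) z := fun z hz =>
    (differentiableOn_Fl.differentiableAt (isOpen_Udom.mem_nhds hz)).hasDerivAt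
  set Gd : ℂ := ((-2 * Real.log Q : ℝ) : ℂ) + ∑ j,
      (((-(lam j) : ℝ) : ℂ) * deriv Fl (AA j δ) - ((lam j : ℝ) : ℂ) * deriv Fl (BB j δ))
    with hGddef
  have hGD : HasDerivAt G Gd δ := by
    have h1 : HasDerivAt (fun w : ℂ => (1 - 2*w) * (Real.log Q : ℂ))
        (((-2 * Real.log Q : ℝ) : ℂ)) δ := by
      have h0 : HasDerivAt (fun w : ℂ => 1 - 2*w) (-2 : ℂ) δ := by
        simpa using ((hasDerivAt_id δ).const_mul (2:ℂ)).const_sub (1:ℂ)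
      have h0' := h0.mul_const ((Real.log Q : ℝ) : ℂ)
      refine h0'.congr_deriv ?_
      push_cast
      ring
    have h2 : ∀ j : Fin r, HasDerivAt (fun w => Fl (AA j w))
        (((-(lam j) : ℝ) : ℂ) * deriv Fl (AA j δ)) δ := by
      intro j
      have hA : HasDerivAt (fun w : ℂ => AA j w) (-(lam j : ℂ)) δ := by
        have h0 : HasDerivAt (fun w : ℂ => 1 - w) (-1 : ℂ) δ := by
          simpa using (hasDerivAt_id δ).const_sub (1:ℂ)
        have h0' := (h0.const_mul ((lam j : ℝ) : ℂ)).add_const ((starRingEnd ℂ) (mu j))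
        refine h0'.congr_deriv ?_
        ring
      have hcomp := (hFd (AA j δ) (hAAU δ hδV j)).comp δ hA
      refine hcomp.congr_deriv ?_
      push_cast
      ring
    have h3 : ∀ j : Fin r, HasDerivAt (fun w => Fl (BB j w))
        (((lam j : ℝ) : ℂ) * deriv Fl (BB j δ)) δ := by
      intro j
      have hB : HasDerivAt (fun w : ℂ => BB j w) ((lam j : ℂ)) δ := by
        have h0' := ((hasDerivAt_id δ).const_mul ((lam j : ℝ) : ℂ)).add_const (mu j)
        refine h0'.congr_deriv ?_
        ring
      have hcomp := (hFd (BB j δ) (hBBU δ hδV j)).comp δ hB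
      refine hcomp.congr_deriv ?_
      ring
    have h4 : HasDerivAt (fun w => ∑ j, (Fl (AA j w) - Fl (BB j w)))
        (∑ j, (((-(lam j) : ℝ) : ℂ) * deriv Fl (AA j δ)
          - ((lam j : ℝ) : ℂ) * deriv Fl (BB j δ))) δ :=
      HasDerivAt.fun_sum (fun j _ => (h2 j).sub (h3 j))
    exact h1.add h4
  have hbound : ∀ j : Fin r, Bq ≤ (deriv Fl (AA j δ)).re ∧ Bq ≤ (deriv Fl (BB j δ)).re := by
    intro j
    have hlj := hlam j
    have ht1 : (1:ℝ) ≤ |δ.im| := le_trans ht₀1 hT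
    have hc0 : 0 < lam j * t₀ / 2 := by positivity
    have hc1 : 1 ≤ lam j * t₀ / 2 := by
      have := hkey2 j
      have h1 : (1:ℝ) ≤ Real.exp (2 + Bq) := Real.one_le_exp (by positivity)
      linarith
    have hlogc : 2 + Bq ≤ Real.log (lam j * t₀ / 2) := by
      have := Real.log_le_log (Real.exp_pos _) (hkey2 j)
      rwa [Real.log_exp] at this
    have habs1 : |lam j * δ.im| = lam j * |δ.im| := by rw [abs_mul, abs_of_pos hlj]
    have habs2 : |lam j * δ.im| ≤ |lam j * δ.im + (mu j).im| + |(mu j).im| := by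
      have := abs_add_le (lam j * δ.im + (mu j).im) (-(mu j).im)
      simpa using this
    have hk1 := hkey1 j
    have hmono : lam j * t₀ ≤ lam j * |δ.im| := by nlinarith
    have himabs1 : lam j * t₀ / 2 ≤ |lam j * δ.im + (mu j).im| := by
      rw [habs1] at habs2
      linarith
    have himabs2 : lam j * t₀ / 2 ≤ |(-(lam j * δ.im) - (mu j).im)| := by
      rw [show (-(lam j * δ.im) - (mu j).im) = -(lam j * δ.im + (mu j).im) by ring, abs_neg]
      rw [habs1] at habs2
      linarith
    constructor
    · have h1 := re_deriv_Fl' (z := AA j δ) ((hmemV δ hδV j).1) ?_ hc0 hc1 ?_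
      · linarith
      · rw [hreAA]
        have := hmu j
        nlinarith
      · rw [himAA]
        exact himabs2
    · have h1 := re_deriv_Fl' (z := BB j δ) ((hmemV δ hδV j).2) ?_ hc0 hc1 ?_
      · linarith
      · rw [hreBB]
        have := hmu j
        nlinarith
      · rw [himBB]
        exact himabs1
  have hReGd : Gd.re < 0 := by
    have hre : Gd.re = -2 * Real.log Q
        + ∑ j, ((-(lam j)) * (deriv Fl (AA j δ)).re - lam j * (deriv Fl (BB j δ)).re) := by
      rw [hGddef, Complex.add_re, Complex.ofReal_re, Complex.re_sum]
      congr 1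
      apply Finset.sum_congr rfl
      intro j _
      rw [Complex.sub_re, Complex.re_ofReal_mul, Complex.re_ofReal_mul]
    have hsum : ∑ j, ((-(lam j)) * (deriv Fl (AA j δ)).re - lam j * (deriv Fl (BB j δ)).re)
        ≤ ∑ j, (-(2 * Bq) * lam j) := by
      apply Finset.sum_le_sum
      intro j _
      have h := hbound j
      have hlj := hlam j
      nlinarith [h.1, h.2]
    have hsum2 : ∑ j, (-(2 * Bq) * lam j) = -(Bq * (2 * ∑ j, lam j)) := by
      rw [← Finset.mul_sum]
      ring
    have hdeg : Bq * 1 ≤ Bq * (2 * ∑ j, lam j) := by nlinarith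
    have h1 : Real.log Q ≤ |Real.log Q| := le_abs_self _
    have h2 : -|Real.log Q| ≤ Real.log Q := neg_abs_le _
    rw [hre]
    have h3 : ∑ j, ((-(lam j)) * (deriv Fl (AA j δ)).re - lam j * (deriv Fl (BB j δ)).re)
        ≤ -(Bq * 1) := by
      rw [hsum2] at hsum
      linarith
    simp only [hBqdef] at h3 ⊢
    linarith
  have hGdne : Gd ≠ 0 := by
    intro h
    rw [h] at hReGd
    simp at hReGd
  have hExpD : HasDerivAt (fun w => ω * Complex.exp (G w)) (ω * (Complex.exp (G δ) * Gd)) δ :=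
    (hGD.cexp).const_mul ω
  have hEq : (fun s : ℂ => ω * (Q : ℂ) ^ (1 - 2 * s) *
      ∏ j, Complex.Gamma ((lam j : ℂ) * (1 - s) + (starRingEnd ℂ) (mu j)) /
        Complex.Gamma ((lam j : ℂ) * s + mu j)) =ᶠ[𝓝 δ] fun w => ω * Complex.exp (G w) :=
    Filter.eventuallyEq_of_mem (hVopen.mem_nhds hδV) (fun w hw => hDeltaEq w hw)
  rw [hEq.deriv_eq, hExpD.deriv]
  have haG : ω * Complex.exp (G δ) = a := by rw [← hDeltaEq δ hδV]; exact hDa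
  rw [← mul_assoc, haG]
  exact mul_ne_zero ha hGdne

end MainProof

/-- **Simplicity of high `a`-points**. -/
theorem apoints_simple (r : ℕ) (Q : ℝ) (lam : Fin r → ℝ) (mu : Fin r → ℂ) (ω : ℂ)
    (hQ : 0 < Q) (hlam : ∀ j, 0 < lam j) (hmu : ∀ j, 0 ≤ (mu j).re)
    (hω : ‖ω‖ = 1)
    (a : ℂ) (ha : a ≠ 0) (hd : 1 ≤ deg r lam) :
    ∃ t₀ > 0, ∀ s : ℂ, IsAPoint r Q lam mu ω a s → t₀ ≤ |s.im| →
      deriv (Delta r Q lam mu ω) s ≠ 0 := by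
  obtain ⟨t₀, ht₀, h⟩ := apoints_simple' r Q lam mu ω hQ hlam hmu hω a ha
    (by simpa [deg] using hd)
  refine ⟨t₀, ht₀, fun s hs ht => ?_⟩
  exact h s ⟨hs.1, hs.2.1, hs.2.2⟩ ht
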